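/- There exists a nonzero constant κ ∈ ℂ such that for every (x_1,x_2) ∈ ℂ² with |x_2| < 1 the series ∑_{s_1=1}^{2} ∑_{s_2=5}^{∞} (s_1−3)(s_2−4)·((s_1+s_2−1)!/((s_1−1)!·(s_2−1)!))·x_1^{s_1}·x_2^{s_2} converges absolutely and equals κ · x_1·x_2^5·(6x_1x_2² − 18x_1x_2 + 3x_2² + 15x_1 − 8x_2 + 5) / (1−x_2)^4. -/

import Mathlib

/-!
Fixing `s₁ ∈ {1, 2}`, the factorial ratio is `s₂` resp. `s₂ (s₂ + 1)`, so each row of the series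
is a polynomial in `s₂` times a geometric series in `x₂`. Expanding that polynomial in the basis
`binom(n + k, k)` sums each row by `∑ binom(n + k, k) rⁿ = (1 - r)^(-k-1)`, and the two rows add up
to `-2` times `y₇`. Absolute convergence comes for free, `ℂ` being finite-dimensional over `ℝ`.
-/

/-- The general term of the hypergeometric series supported in
`S₇ = {(s₁,s₂) : 1 ≤ s₁ ≤ 2, 5 ≤ s₂}` with Ore–Sato coefficient
`(s₁−3)(s₂−4)Γ(s₁+s₂)/(Γ(s₁)Γ(s₂))`, indexed by `q : Fin 2 × ℕ` via
`s₁ = q.1 + 1`, `s₂ = q.2 + 5`. -/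
noncomputable def term18 (x₁ x₂ : ℂ) (q : Fin 2 × ℕ) : ℂ :=
  (((q.1 : ℕ) + 1 : ℂ) - 3) * ((q.2 + 5 : ℂ) - 4) *
    (((((q.1 : ℕ) + 1) + (q.2 + 5) - 1).factorial : ℂ) /
      (((((q.1 : ℕ) + 1) - 1).factorial : ℂ) * (((q.2 + 5) - 1).factorial : ℂ))) *
    x₁ ^ ((q.1 : ℕ) + 1) * x₂ ^ (q.2 + 5)

theorem hasSum_prod_of_fintype_left {α β γ : Type*} [AddCommMonoid α] [TopologicalSpace α]
    [ContinuousAdd α] [Fintype β] {f : β × γ → α} {g : β → α}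
    (hf : ∀ b, HasSum (fun c => f (b, c)) (g b)) : HasSum f (∑ b, g b) := by
  classical
  have hsplit : f = fun q => ∑ b, if q.1 = b then f q else 0 := by
    funext q
    simp
  rw [hsplit]
  refine hasSum_sum fun b _ => ?_
  rw [← (Prod.mk_right_injective b).hasSum_iff]
  · simpa [Function.comp_def] using hf b
  · rintro ⟨b', c⟩ hc
    refine if_neg ?_
    rintro rfl
    exact hc ⟨c, rfl⟩

namespace Nat

variable {K : Type*} [Field K] [CharZero K]

theorem cast_add_two_choose_two (n : ℕ) : ((n + 2).choose 2 : K) = (n + 1) * (n + 2) / 2 := by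
  rw [cast_choose_two]
  push_cast
  ring

theorem cast_add_three_choose_three (n : ℕ) :
    ((n + 3).choose 3 : K) = (n + 1) * (n + 2) * (n + 3) / 6 := by
  have h : ((n + 3 : ℕ) : K) * ((n + 2).choose 2 : K) = ((n + 3).choose 3 : K) * 3 := by
    exact_mod_cast add_one_mul_choose_eq (n + 2) 2
  rw [cast_add_two_choose_two] at h
  push_cast at h
  linear_combination -h / 3

end Nat

section Geometric

variable {𝕜 : Type*} [NormedField 𝕜] [CharZero 𝕜] {r : 𝕜}

theorem hasSum_add_one_mul_add_five_mul_geometric (hr : ‖r‖ < 1) :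
    HasSum (fun n : ℕ => ((n : 𝕜) + 1) * (n + 5) * r ^ n)
      ((5 - 8 * r + 3 * r ^ 2) / (1 - r) ^ 4) := by
  have hr₁ : 1 - r ≠ 0 := sub_ne_zero.2 fun h => by simp [← h] at hr
  have hcoeff : (fun n : ℕ => ((n : 𝕜) + 1) * (n + 5) * r ^ n) = fun n =>
      2 * ((n + 2).choose 2 * r ^ n) + 3 * ((n + 1).choose 1 * r ^ n) := by
    funext n
    rw [Nat.cast_add_two_choose_two, Nat.choose_one_right]
    push_cast
    ring
  have hsum : (5 - 8 * r + 3 * r ^ 2) / (1 - r) ^ 4 =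
      2 * (1 / (1 - r) ^ (2 + 1)) + 3 * (1 / (1 - r) ^ (1 + 1)) := by
    field_simp
    ring
  rw [hcoeff, hsum]
  exact ((hasSum_choose_mul_geometric_of_norm_lt_one 2 hr).mul_left 2).add
    ((hasSum_choose_mul_geometric_of_norm_lt_one 1 hr).mul_left 3)

theorem hasSum_add_one_mul_add_five_mul_add_six_mul_geometric (hr : ‖r‖ < 1) :
    HasSum (fun n : ℕ => ((n : 𝕜) + 1) * (n + 5) * (n + 6) * r ^ n)
      ((30 - 36 * r + 12 * r ^ 2) / (1 - r) ^ 4) := by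
  have hr₁ : 1 - r ≠ 0 := sub_ne_zero.2 fun h => by simp [← h] at hr
  have hcoeff : (fun n : ℕ => ((n : 𝕜) + 1) * (n + 5) * (n + 6) * r ^ n) = fun n =>
      6 * ((n + 3).choose 3 * r ^ n) + 12 * ((n + 2).choose 2 * r ^ n) +
        12 * ((n + 1).choose 1 * r ^ n) := by
    funext n
    rw [Nat.cast_add_three_choose_three, Nat.cast_add_two_choose_two, Nat.choose_one_right]
    push_cast
    ring
  have hsum : (30 - 36 * r + 12 * r ^ 2) / (1 - r) ^ 4 =
      6 * (1 / (1 - r) ^ (3 + 1)) + 12 * (1 / (1 - r) ^ (2 + 1)) +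
        12 * (1 / (1 - r) ^ (1 + 1)) := by
    field_simp
    ring
  rw [hcoeff, hsum]
  exact (((hasSum_choose_mul_geometric_of_norm_lt_one 3 hr).mul_left 6).add
    ((hasSum_choose_mul_geometric_of_norm_lt_one 2 hr).mul_left 12)).add
    ((hasSum_choose_mul_geometric_of_norm_lt_one 1 hr).mul_left 12)

end Geometric

theorem term18_zero_mk (x₁ x₂ : ℂ) (n : ℕ) :
    term18 x₁ x₂ (0, n) = -2 * x₁ * x₂ ^ 5 * (((n : ℂ) + 1) * (n + 5) * x₂ ^ n) := by
  have hratio : ((0 + 1 + (n + 5) - 1).factorial : ℂ) /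
      ((0 + 1 - 1).factorial * (n + 5 - 1).factorial) = n + 5 := by
    rw [show 0 + 1 + (n + 5) - 1 = n + 4 + 1 by omega, show n + 5 - 1 = n + 4 by omega,
      Nat.factorial_succ]
    push_cast
    field_simp [(n + 4).factorial_ne_zero]
    ring
  simp only [term18, Fin.val_zero, hratio]
  push_cast
  ring

theorem term18_one_mk (x₁ x₂ : ℂ) (n : ℕ) :
    term18 x₁ x₂ (1, n) = -x₁ ^ 2 * x₂ ^ 5 * (((n : ℂ) + 1) * (n + 5) * (n + 6) * x₂ ^ n) := by
  have hratio : ((1 + 1 + (n + 5) - 1).factorial : ℂ) /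
      ((1 + 1 - 1).factorial * (n + 5 - 1).factorial) = (n + 5) * (n + 6) := by
    rw [show 1 + 1 + (n + 5) - 1 = n + 4 + 1 + 1 by omega, show n + 5 - 1 = n + 4 by omega,
      Nat.factorial_succ, Nat.factorial_succ]
    push_cast
    field_simp [(n + 4).factorial_ne_zero]
    ring
  simp only [term18, Fin.val_one, hratio]
  push_cast
  ring

theorem hasSum_term18 (x₁ x₂ : ℂ) (hx₂ : ‖x₂‖ < 1) :
    HasSum (term18 x₁ x₂) (-2 * x₁ * x₂ ^ 5 *
      (6 * x₁ * x₂ ^ 2 - 18 * x₁ * x₂ + 3 * x₂ ^ 2 + 15 * x₁ - 8 * x₂ + 5) / (1 - x₂) ^ 4) := by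
  have hr₁ : 1 - x₂ ≠ 0 := sub_ne_zero.2 fun h => by simp [← h] at hx₂
  have hrow₀ := (hasSum_add_one_mul_add_five_mul_geometric hx₂).mul_left (-2 * x₁ * x₂ ^ 5)
  have hrow₁ := (hasSum_add_one_mul_add_five_mul_add_six_mul_geometric hx₂).mul_left
    (-x₁ ^ 2 * x₂ ^ 5)
  rw [← funext (term18_zero_mk x₁ x₂)] at hrow₀
  rw [← funext (term18_one_mk x₁ x₂)] at hrow₁
  have h := hasSum_prod_of_fintype_left (g := ![_, _]) (Fin.forall_fin_two.2 ⟨hrow₀, hrow₁⟩)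
  rw [h.summable.hasSum_iff, h.tsum_eq, Fin.sum_univ_two, Matrix.cons_val_zero,
    Matrix.cons_val_one, Matrix.cons_val_zero]
  field_simp
  ring

/-- The series solution of the Horn system supported in `S₇` sums, up to a nonzero
constant factor, to the rational function `y₇`. -/
theorem stmt18 :
    ∃ κ : ℂ, κ ≠ 0 ∧ ∀ x₁ x₂ : ℂ, ‖x₂‖ < 1 →
      Summable (fun q : Fin 2 × ℕ => ‖term18 x₁ x₂ q‖) ∧
      HasSum (term18 x₁ x₂)
        (κ * x₁ * x₂ ^ 5 *
          (6 * x₁ * x₂ ^ 2 - 18 * x₁ * x₂ + 3 * x₂ ^ 2 + 15 * x₁ - 8 * x₂ + 5) /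
          (1 - x₂) ^ 4) := by
  refine ⟨-2, by norm_num, fun x₁ x₂ hx₂ => ?_⟩
  have h := hasSum_term18 x₁ x₂ hx₂
  exact ⟨summable_norm_iff.2 h.summable, h⟩
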